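/- Let f : [0,T) × [0,1] → ℝⁿ be smooth with f(t,·) regular for each t and suppose ∂ₜf = V is purely normal (⟨∂ₜf, τ⟩ ≡ 0). Let ψ be a smooth normal vector field along f and set Y = ∇ₜψ + ∇ₛ⁴ψ. Then for all t ∈ (0,T): (d/dt)(½∫_I |ψ|² ds) + ∫_I |∇ₛ²ψ|² ds = −[⟨ψ, ∇ₛ³ψ⟩]₀¹ + [⟨∇ₛψ, ∇ₛ²ψ⟩]₀¹ + ∫_I ⟨Y, ψ⟩ ds − ½∫_I |ψ|²⟨κ, V⟩ ds, where [g]₀¹ = g(t,1) − g(t,0). In particular, if additionally ψ(t,0) = ψ(t,1) = 0 for all t, the term −[⟨ψ, ∇ₛ³ψ⟩]₀¹ vanishes. -/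

import Mathlib

/-!
Differentiating under the integral sign, `∂ₜ(|ψ|² |∂ₓf|) = 2⟨ψ, ∂ₜψ⟩ |∂ₓf| + |ψ|² ⟨τ, ∂ₜ∂ₓf⟩`.
Since `ψ` is normal, `⟨ψ, ∂ₜψ⟩ = ⟨∇ₜψ, ψ⟩`; exchanging `∂ₜ∂ₓf = ∂ₓV` and differentiating
`⟨V, τ⟩ ≡ 0` in `x` gives `⟨τ, ∂ₓV⟩ = -|∂ₓf| ⟨κ, V⟩`. For normal fields `A`, `B` one has
`∂ₛ⟨A, B⟩ = ⟨∇ₛA, B⟩ + ⟨A, ∇ₛB⟩`, so two integrations by parts give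
`∫ ⟨ψ, ∇ₛ⁴ψ⟩ ds = [⟨ψ, ∇ₛ³ψ⟩]₀¹ - [⟨∇ₛψ, ∇ₛ²ψ⟩]₀¹ + ∫ |∇ₛ²ψ|² ds`, and the two computations add up
to the identity.
-/

open scoped RealInnerProductSpace
open MeasureTheory

noncomputable section

abbrev En (n : ℕ) := EuclideanSpace ℝ (Fin n)

variable {n : ℕ}

/-- Arc-length derivative along `f`. -/
def aD (f g : ℝ → En n) : ℝ → En n := fun x => ‖deriv f x‖⁻¹ • deriv g x

/-- Iterated arc-length derivative. -/
def aDIter (f : ℝ → En n) : ℕ → (ℝ → En n) → ℝ → En n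
  | 0, g => g
  | k + 1, g => aD f (aDIter f k g)

/-- Unit tangent vector. -/
def tang (f : ℝ → En n) : ℝ → En n := aD f f

/-- Curvature vector. -/
def curv (f : ℝ → En n) : ℝ → En n := aD f (tang f)

/-- Normal component of the arc-length derivative of a vector field along `f`. -/
def nS (f g : ℝ → En n) : ℝ → En n :=
  fun x => aD f g x - ⟪aD f g x, tang f x⟫ • tang f x

/-- Iterated normal arc-length derivative. -/
def nSIter (f : ℝ → En n) : ℕ → (ℝ → En n) → ℝ → En n
  | 0, g => g
  | k + 1, g => nS f (nSIter f k g)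

/-- Arc-length derivative of a scalar field along `f`. -/
def aDS (f : ℝ → En n) (g : ℝ → ℝ) : ℝ → ℝ := fun x => ‖deriv f x‖⁻¹ * deriv g x

/-- Length of the curve. -/
def len (f : ℝ → En n) : ℝ := ∫ x in (0:ℝ)..1, ‖deriv f x‖

/-- Willmore–Helfrich energy. -/
def WH (lam : ℝ) (ζ : En n) (f : ℝ → En n) : ℝ :=
  (∫ x in (0:ℝ)..1, ((1/2) * ‖curv f x‖ ^ 2 - ⟪curv f x, ζ⟫) * ‖deriv f x‖) + lam * len f

/-- Time derivative of a time dependent field. -/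
def pT (g : ℝ → ℝ → En n) : ℝ → ℝ → En n := fun t x => deriv (fun s => g s x) t

/-- Normal component (w.r.t. the curve `f t`) of the time derivative. -/
def nT (f g : ℝ → ℝ → En n) : ℝ → ℝ → En n :=
  fun t x => pT g t x - ⟪pT g t x, tang (f t) x⟫ • tang (f t) x

/-- Normal arc-length derivative of a time dependent field. -/
def nSF (f g : ℝ → ℝ → En n) : ℝ → ℝ → En n := fun t => nS (f t) (g t)

/-- Tangential component of the velocity. -/
def tanComp (f : ℝ → ℝ → En n) : ℝ → ℝ → ℝ := fun t x => ⟪pT f t x, tang (f t) x⟫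

/-- Normal velocity. -/
def normVel (f : ℝ → ℝ → En n) : ℝ → ℝ → En n :=
  fun t x => pT f t x - tanComp f t x • tang (f t) x

/-- Scale invariant `Lᵖ` norm of the `i`-th normal derivative of `g` along `f`. -/
def sN (f : ℝ → En n) (p : ℝ) (i : ℕ) (g : ℝ → En n) : ℝ :=
  len f ^ ((i : ℝ) + 1 - 1/p) * (∫ x in (0:ℝ)..1, ‖nSIter f i g x‖ ^ p * ‖deriv f x‖) ^ (1/p)

/-- Scale invariant Sobolev-type norm. -/
def sNk (f : ℝ → En n) (k : ℕ) (g : ℝ → En n) : ℝ :=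
  ∑ i ∈ Finset.range (k + 1), sN f 2 i g


open Function Set Filter Topology
open scoped ContDiff

section TwoVariables

variable {E : Type*} [NormedAddCommGroup E] [NormedSpace ℝ E] {f : ℝ → ℝ → E}
  {k m : WithTop ℕ∞} {s x : ℝ}

theorem ContDiff.curry_left (hf : ContDiff ℝ k (uncurry f)) (x : ℝ) : ContDiff ℝ k (f · x) :=
  hf.comp (contDiff_id.prodMk contDiff_const)

theorem ContDiff.curry_right (hf : ContDiff ℝ k (uncurry f)) (s : ℝ) : ContDiff ℝ k (f s) :=
  hf.comp (contDiff_const.prodMk contDiff_id)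

theorem hasDerivAt_curry_left (hf : DifferentiableAt ℝ (uncurry f) (s, x)) :
    HasDerivAt (f · x) (fderiv ℝ (uncurry f) (s, x) (1, 0)) s :=
  (hf.hasFDerivAt.comp_hasDerivAt s ((hasDerivAt_id' s).prodMk (hasDerivAt_const s x)) :)

theorem hasDerivAt_curry_right (hf : DifferentiableAt ℝ (uncurry f) (s, x)) :
    HasDerivAt (f s) (fderiv ℝ (uncurry f) (s, x) (0, 1)) x :=
  hf.hasFDerivAt.comp_hasDerivAt x ((hasDerivAt_const x s).prodMk (hasDerivAt_id' x))

theorem ContDiff.uncurry_deriv_left (hf : ContDiff ℝ k (uncurry f)) (hmk : m + 1 ≤ k) :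
    ContDiff ℝ m (uncurry fun s x => deriv (f · x) s) := by
  have hf' : Differentiable ℝ (uncurry f) :=
    hf.differentiable (zero_lt_one.trans_le (le_add_self.trans hmk)).ne'
  have h : (uncurry fun s x => deriv (f · x) s) = fun p => fderiv ℝ (uncurry f) p (1, 0) :=
    funext fun p => (hasDerivAt_curry_left (hf' p)).deriv
  rw [h]
  exact (hf.fderiv_right hmk).clm_apply contDiff_const

theorem ContDiff.uncurry_deriv_right (hf : ContDiff ℝ k (uncurry f)) (hmk : m + 1 ≤ k) :
    ContDiff ℝ m (uncurry fun s x => deriv (f s) x) := by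
  have hf' : Differentiable ℝ (uncurry f) :=
    hf.differentiable (zero_lt_one.trans_le (le_add_self.trans hmk)).ne'
  have h : (uncurry fun s x => deriv (f s) x) = fun p => fderiv ℝ (uncurry f) p (0, 1) :=
    funext fun p => (hasDerivAt_curry_right (hf' p)).deriv
  rw [h]
  exact (hf.fderiv_right hmk).clm_apply contDiff_const

theorem deriv_deriv_curry_comm (hf : ContDiff ℝ 2 (uncurry f)) (t x : ℝ) :
    deriv (fun s => deriv (f s) x) t = deriv (fun y => deriv (f · y) t) x := by
  set D := fderiv ℝ (uncurry f)
  have hf' : Differentiable ℝ (uncurry f) := hf.differentiable two_ne_zero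
  have hD : DifferentiableAt ℝ D (t, x) :=
    (hf.fderiv_right (m := 1) le_rfl).differentiable one_ne_zero (t, x)
  have hx : (fun s => deriv (f s) x) = fun s => D (s, x) (0, 1) :=
    funext fun s => (hasDerivAt_curry_right (hf' (s, x))).deriv
  have ht : (fun y => deriv (f · y) t) = fun y => D (t, y) (1, 0) :=
    funext fun y => (hasDerivAt_curry_left (hf' (t, y))).deriv
  have hDs : HasDerivAt (fun s => D (s, x) (0, 1)) (fderiv ℝ D (t, x) (1, 0) (0, 1)) t :=
    ((ContinuousLinearMap.apply ℝ E (0, 1)).hasFDerivAt.comp_hasDerivAt t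
      (hasDerivAt_curry_left (f := fun s y => D (s, y)) hD) :)
  have hDy : HasDerivAt (fun y => D (t, y) (1, 0)) (fderiv ℝ D (t, x) (0, 1) (1, 0)) x :=
    ((ContinuousLinearMap.apply ℝ E (1, 0)).hasFDerivAt.comp_hasDerivAt x
      (hasDerivAt_curry_right (f := fun s y => D (s, y)) hD) :)
  rw [hx, ht, hDs.deriv, hDy.deriv]
  exact (hf.contDiffAt.isSymmSndFDerivAt (by simp)).eq _ _

end TwoVariables

theorem hasDerivAt_intervalIntegral_of_continuousOn {E : Type*} [NormedAddCommGroup E]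
    [NormedSpace ℝ E] {F F' : ℝ → ℝ → E} {K : Set ℝ} {a b t : ℝ}
    (hK : IsCompact K) (hKt : K ∈ 𝓝 t) (hF : ∀ s ∈ K, ContinuousOn (F s) (uIcc a b))
    (hF' : ContinuousOn (uncurry F') (K ×ˢ uIcc a b))
    (hderiv : ∀ s ∈ K, ∀ x ∈ uIcc a b, HasDerivAt (F · x) (F' s x) s) :
    HasDerivAt (fun s => ∫ x in a..b, F s x) (∫ x in a..b, F' t x) t := by
  obtain ⟨C, hC⟩ := (hK.prod isCompact_uIcc).exists_bound_of_continuousOn hF'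
  have ht : t ∈ K := mem_of_mem_nhds hKt
  have hF't : ContinuousOn (F' t) (uIcc a b) :=
    hF'.comp (Continuous.prodMk_right t).continuousOn fun x hx => ⟨ht, hx⟩
  refine (intervalIntegral.hasDerivAt_integral_of_dominated_loc_of_deriv_le
    (bound := fun _ => C) hKt ?_ ((hF t ht).intervalIntegrable)
    ((hF't.mono uIoc_subset_uIcc).aestronglyMeasurable measurableSet_uIoc) ?_
    intervalIntegrable_const ?_).2
  · exact eventually_of_mem hKt fun s hs =>
      ((hF s hs).mono uIoc_subset_uIcc).aestronglyMeasurable measurableSet_uIoc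
  · exact .of_forall fun x hx s hs => hC (s, x) ⟨hs, uIoc_subset_uIcc hx⟩
  · exact .of_forall fun x hx s hs => hderiv s hs x (uIoc_subset_uIcc hx)

theorem HasDerivAt.norm {F : Type*} [NormedAddCommGroup F] [InnerProductSpace ℝ F]
    {v : ℝ → F} {v' : F} {x : ℝ} (hv : HasDerivAt v v' x) (h0 : v x ≠ 0) :
    HasDerivAt (fun y => ‖v y‖) (⟪v x, v'⟫ / ‖v x‖) x := by
  have hsqrt : HasDerivAt (fun y => √(‖v y‖ ^ 2)) (1 / (2 * √(‖v x‖ ^ 2)) * (2 * ⟪v x, v'⟫)) x :=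
    (Real.hasDerivAt_sqrt (pow_ne_zero 2 (norm_ne_zero_iff.mpr h0))).comp x hv.norm_sq
  simp only [Real.sqrt_sq (norm_nonneg _)] at hsqrt
  convert hsqrt using 1
  field_simp

theorem hasDerivAt_integral_norm_sq_mul_norm_deriv {F : Type*} [NormedAddCommGroup F]
    [InnerProductSpace ℝ F] {f ψ : ℝ → ℝ → F} {K : Set ℝ} {a b t : ℝ} (hab : a ≤ b)
    (hf : ContDiff ℝ 2 (uncurry f)) (hψ : ContDiff ℝ 1 (uncurry ψ))
    (hK : IsCompact K) (hKt : K ∈ 𝓝 t) (hreg : ∀ s ∈ K, ∀ x ∈ Icc a b, deriv (f s) x ≠ 0) :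
    HasDerivAt (fun s => ∫ x in a..b, ‖ψ s x‖ ^ 2 * ‖deriv (f s) x‖)
      (∫ x in a..b, (2 * ⟪ψ t x, deriv (ψ · x) t⟫ * ‖deriv (f t) x‖
        + ‖ψ t x‖ ^ 2 * (⟪deriv (f t) x, deriv (fun s => deriv (f s) x) t⟫
          / ‖deriv (f t) x‖))) t := by
  rw [← uIcc_of_le hab] at hreg
  have hg : ContDiff ℝ 1 (uncurry fun s x => deriv (f s) x) :=
    hf.uncurry_deriv_right (by norm_num)
  have hg' := (hg.uncurry_deriv_left (m := 0) (by simp)).continuous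
  have hψ' := (hψ.uncurry_deriv_left (m := 0) (by simp)).continuous
  have hψc := hψ.continuous
  have hgc := hg.continuous
  apply hasDerivAt_intervalIntegral_of_continuousOn hK hKt
  · intro s _
    exact ((hψc.comp (Continuous.prodMk_right s)).norm.pow 2 |>.mul
      (hgc.comp (Continuous.prodMk_right s)).norm).continuousOn
  · refine (((continuous_const.mul (hψc.inner hψ')).mul hgc.norm).continuousOn).add
      ((hψc.norm.pow 2).continuousOn.mul ((hgc.inner hg').continuousOn.div hgc.norm.continuousOn
        fun p hp => norm_ne_zero_iff.mpr (hreg p.1 hp.1 p.2 hp.2)))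
  · intro s hs x hx
    exact ((hψ.curry_left x).differentiable one_ne_zero s).hasDerivAt.norm_sq.mul
      (((hg.curry_left x).differentiable one_ne_zero s).hasDerivAt.norm (hreg s hs x hx))

section Curve

variable {c g A B : ℝ → En n} {a b x : ℝ}

theorem deriv_eq_norm_smul_aD (hx : deriv c x ≠ 0) : deriv g x = ‖deriv c x‖ • aD c g x := by
  rw [aD, smul_smul, mul_inv_cancel₀ (norm_ne_zero_iff.mpr hx), one_smul]

theorem norm_tang (hx : deriv c x ≠ 0) : ‖tang c x‖ = 1 := by
  rw [tang, aD, norm_smul, norm_inv, norm_norm, inv_mul_cancel₀ (norm_ne_zero_iff.mpr hx)]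

theorem inner_tang_eq_div_norm (c : ℝ → En n) (w : En n) (x : ℝ) :
    ⟪tang c x, w⟫ = ⟪deriv c x, w⟫ / ‖deriv c x‖ := by
  rw [tang, aD, real_inner_smul_left, div_eq_inv_mul]

theorem inner_nS_tang (g : ℝ → En n) (hx : deriv c x ≠ 0) : ⟪nS c g x, tang c x⟫ = 0 := by
  simp only [nS, inner_sub_left, real_inner_smul_left, real_inner_self_eq_norm_sq, norm_tang hx]
  ring

theorem inner_deriv_eq_norm_mul_inner_nS (hx : deriv c x ≠ 0) (hA : ⟪A x, tang c x⟫ = 0) :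
    ⟪A x, deriv B x⟫ = ‖deriv c x‖ * ⟪A x, nS c B x⟫ := by
  rw [deriv_eq_norm_smul_aD hx, real_inner_smul_right]
  simp only [nS, inner_sub_right, real_inner_smul_right, hA, mul_zero, sub_zero]

theorem isOpen_setOf_deriv_ne_zero (hc : ContDiff ℝ 1 c) : IsOpen {x | deriv c x ≠ 0} :=
  isOpen_ne.preimage (hc.continuous_deriv le_rfl)

theorem ContDiffOn.aD (hc : ContDiff ℝ ∞ c) (hg : ContDiffOn ℝ ∞ g {x | deriv c x ≠ 0}) :
    ContDiffOn ℝ ∞ (aD c g) {x | deriv c x ≠ 0} := by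
  have hdc : ContDiffOn ℝ ∞ (deriv c) {x | deriv c x ≠ 0} :=
    (contDiff_infty_iff_deriv.mp hc).2.contDiffOn
  exact ((hdc.norm ℝ fun x hx => hx).inv fun x hx => norm_ne_zero_iff.mpr hx).smul
    (hg.deriv_of_isOpen (isOpen_setOf_deriv_ne_zero (hc.of_le ENat.LEInfty.out)) le_rfl)

theorem contDiffOn_tang (hc : ContDiff ℝ ∞ c) : ContDiffOn ℝ ∞ (tang c) {x | deriv c x ≠ 0} :=
  hc.contDiffOn.aD hc

theorem contDiffOn_curv (hc : ContDiff ℝ ∞ c) : ContDiffOn ℝ ∞ (curv c) {x | deriv c x ≠ 0} :=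
  (contDiffOn_tang hc).aD hc

theorem ContDiffOn.nS (hc : ContDiff ℝ ∞ c) (hg : ContDiffOn ℝ ∞ g {x | deriv c x ≠ 0}) :
    ContDiffOn ℝ ∞ (nS c g) {x | deriv c x ≠ 0} :=
  (hg.aD hc).sub (((hg.aD hc).inner ℝ (contDiffOn_tang hc)).smul (contDiffOn_tang hc))

theorem contDiffOn_nSIter (hc : ContDiff ℝ ∞ c) (hg : ContDiff ℝ ∞ g) :
    ∀ k, ContDiffOn ℝ ∞ (nSIter c k g) {x | deriv c x ≠ 0}
  | 0 => hg.contDiffOn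
  | k + 1 => (contDiffOn_nSIter hc hg k).nS hc

theorem intervalIntegrable_mul_norm_deriv {u : ℝ → ℝ} (hab : a ≤ b) (hc : ContDiff ℝ 1 c)
    (hu : ContinuousOn u (Icc a b)) :
    IntervalIntegrable (fun x => u x * ‖deriv c x‖) volume a b :=
  (hu.mul (hc.continuous_deriv le_rfl).norm.continuousOn).intervalIntegrable_of_Icc hab

theorem hasDerivAt_inner_of_normal (hx : deriv c x ≠ 0) (hA : DifferentiableAt ℝ A x)
    (hB : DifferentiableAt ℝ B x) (hAn : ⟪A x, tang c x⟫ = 0) (hBn : ⟪B x, tang c x⟫ = 0) :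
    HasDerivAt (fun y => ⟪A y, B y⟫) ((⟪nS c A x, B x⟫ + ⟪A x, nS c B x⟫) * ‖deriv c x‖) x := by
  refine (hA.hasDerivAt.inner ℝ hB.hasDerivAt).congr_deriv ?_
  rw [inner_deriv_eq_norm_mul_inner_nS hx hAn, real_inner_comm (B x),
    inner_deriv_eq_norm_mul_inner_nS hx hBn, real_inner_comm (nS c A x)]
  ring

theorem integral_inner_nS_eq_sub (hab : a ≤ b) (hc : ContDiff ℝ ∞ c)
    (hreg : ∀ x ∈ Icc a b, deriv c x ≠ 0)
    (hA : ContDiffOn ℝ ∞ A {x | deriv c x ≠ 0}) (hB : ContDiffOn ℝ ∞ B {x | deriv c x ≠ 0})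
    (hAn : ∀ x ∈ Icc a b, ⟪A x, tang c x⟫ = 0) (hBn : ∀ x ∈ Icc a b, ⟪B x, tang c x⟫ = 0) :
    ∫ x in a..b, ⟪A x, nS c B x⟫ * ‖deriv c x‖
      = ⟪A b, B b⟫ - ⟪A a, B a⟫ - ∫ x in a..b, ⟪nS c A x, B x⟫ * ‖deriv c x‖ := by
  have hU := isOpen_setOf_deriv_ne_zero (hc.of_le ENat.LEInfty.out)
  have hdiff : ∀ {u : ℝ → En n}, ContDiffOn ℝ ∞ u {x | deriv c x ≠ 0} → ∀ x ∈ Icc a b,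
      DifferentiableAt ℝ u x := fun hu x hx =>
    (hu.contDiffAt (hU.mem_nhds (hreg x hx))).differentiableAt (by simp)
  have hint : ∀ {u v : ℝ → En n}, ContDiffOn ℝ ∞ u {x | deriv c x ≠ 0} →
      ContDiffOn ℝ ∞ v {x | deriv c x ≠ 0} →
      IntervalIntegrable (fun x => ⟪u x, v x⟫ * ‖deriv c x‖) volume a b := fun hu hv =>
    intervalIntegrable_mul_norm_deriv hab (hc.of_le ENat.LEInfty.out)
      ((hu.continuousOn.inner hv.continuousOn).mono hreg)
  have hderiv : ∀ x ∈ uIcc a b, HasDerivAt (fun y => ⟪A y, B y⟫)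
      ((⟪nS c A x, B x⟫ + ⟪A x, nS c B x⟫) * ‖deriv c x‖) x := by
    intro x hx
    rw [uIcc_of_le hab] at hx
    exact hasDerivAt_inner_of_normal (hreg x hx) (hdiff hA x hx) (hdiff hB x hx) (hAn x hx)
      (hBn x hx)
  have hftc := intervalIntegral.integral_eq_sub_of_hasDerivAt hderiv
    (((hint (hA.nS hc) hB).add (hint hA (hB.nS hc))).congr fun x _ => (add_mul _ _ _).symm)
  simp only [add_mul] at hftc
  rw [intervalIntegral.integral_add (hint (hA.nS hc) hB) (hint hA (hB.nS hc))] at hftc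
  linarith

theorem integral_inner_nSIter_four (hab : a ≤ b) (hc : ContDiff ℝ ∞ c)
    (hreg : ∀ x ∈ Icc a b, deriv c x ≠ 0) (hg : ContDiff ℝ ∞ g)
    (hgn : ∀ x ∈ Icc a b, ⟪g x, tang c x⟫ = 0) :
    ∫ x in a..b, ⟪g x, nSIter c 4 g x⟫ * ‖deriv c x‖
      = (⟪g b, nSIter c 3 g b⟫ - ⟪g a, nSIter c 3 g a⟫)
        - (⟪nS c g b, nSIter c 2 g b⟫ - ⟪nS c g a, nSIter c 2 g a⟫)
        + ∫ x in a..b, ‖nSIter c 2 g x‖ ^ 2 * ‖deriv c x‖ := by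
  have hnormal : ∀ k, ∀ x ∈ Icc a b, ⟪nSIter c (k + 1) g x, tang c x⟫ = 0 :=
    fun k x hx => inner_nS_tang _ (hreg x hx)
  have hparts₁ := integral_inner_nS_eq_sub hab hc hreg hg.contDiffOn
    (contDiffOn_nSIter hc hg 3) hgn (hnormal 2)
  have hparts₂ := integral_inner_nS_eq_sub hab hc hreg (contDiffOn_nSIter hc hg 1)
    (contDiffOn_nSIter hc hg 2) (hnormal 0) (hnormal 1)
  simp only [nSIter] at hparts₁ hparts₂ ⊢
  rw [hparts₁, hparts₂]
  simp only [real_inner_self_eq_norm_sq]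
  ring

theorem inner_tang_deriv_of_normal {V : ℝ → En n} (hab : a < b)
    (hc : ContDiff ℝ ∞ c) (hx : x ∈ Icc a b) (hreg : deriv c x ≠ 0)
    (hV : DifferentiableAt ℝ V x) (hVn : ∀ y ∈ Icc a b, ⟪V y, tang c y⟫ = 0) :
    ⟪tang c x, deriv V x⟫ = -(‖deriv c x‖ * ⟪curv c x, V x⟫) := by
  have hτ : HasDerivAt (tang c) (‖deriv c x‖ • curv c x) x := by
    have hd : DifferentiableAt ℝ (tang c) x :=
      ((contDiffOn_tang hc).contDiffAt ((isOpen_setOf_deriv_ne_zero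
        (hc.of_le ENat.LEInfty.out)).mem_nhds hreg)).differentiableAt (by simp)
    rw [curv, ← deriv_eq_norm_smul_aD hreg]
    exact hd.hasDerivAt
  have hzero : deriv (fun y => ⟪V y, tang c y⟫) x = 0 :=
    ((hasDerivWithinAt_const x (Icc a b) 0).congr hVn (hVn x hx)).deriv_eq_zero
      (uniqueDiffOn_Icc hab x hx)
  rw [(hV.hasDerivAt.inner ℝ hτ).deriv, real_inner_smul_right] at hzero
  rw [real_inner_comm (deriv V x), real_inner_comm (V x)]
  linarith

end Curve

section Flow

variable {f ψ : ℝ → ℝ → En n} {K : Set ℝ} {a b t : ℝ}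

theorem continuous_pT (hf : ContDiff ℝ 1 (uncurry f)) (t : ℝ) : Continuous (pT f t) :=
  (hf.uncurry_deriv_left (m := 0) (by simp)).continuous.comp (Continuous.prodMk_right t)

theorem inner_pT_eq_inner_nT {x : ℝ} (hψn : ⟪ψ t x, tang (f t) x⟫ = 0) :
    ⟪ψ t x, pT ψ t x⟫ = ⟪nT f ψ t x, ψ t x⟫ := by
  rw [nT, inner_sub_left, real_inner_smul_left, real_inner_comm (ψ t x) (tang (f t) x), hψn,
    mul_zero, sub_zero, real_inner_comm]

theorem intervalIntegrable_inner_nT_mul (hab : a ≤ b) (hf : ContDiff ℝ ∞ (uncurry f))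
    (hψ : ContDiff ℝ 1 (uncurry ψ)) (hreg : ∀ x ∈ Icc a b, deriv (f t) x ≠ 0) :
    IntervalIntegrable (fun x => ⟪nT f ψ t x, ψ t x⟫ * ‖deriv (f t) x‖) volume a b := by
  have hpT := (continuous_pT hψ t).continuousOn (s := Icc a b)
  have hτ := (contDiffOn_tang (hf.curry_right t)).continuousOn.mono hreg
  have hnT : ContinuousOn (nT f ψ t) (Icc a b) := hpT.sub ((hpT.inner hτ).fun_smul hτ)
  exact intervalIntegrable_mul_norm_deriv hab ((hf.curry_right t).of_le ENat.LEInfty.out)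
    (hnT.inner (hψ.curry_right t).continuous.continuousOn)

theorem hasDerivAt_half_integral_norm_sq (hab : a < b) (hf : ContDiff ℝ ∞ (uncurry f))
    (hψ : ContDiff ℝ ∞ (uncurry ψ)) (hK : IsCompact K) (hKt : K ∈ 𝓝 t)
    (hreg : ∀ s ∈ K, ∀ x ∈ Icc a b, deriv (f s) x ≠ 0)
    (hV : ∀ x ∈ Icc a b, ⟪pT f t x, tang (f t) x⟫ = 0)
    (hψn : ∀ x ∈ Icc a b, ⟪ψ t x, tang (f t) x⟫ = 0) :
    HasDerivAt (fun s => (1/2) * ∫ x in a..b, ‖ψ s x‖ ^ 2 * ‖deriv (f s) x‖)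
      ((∫ x in a..b, ⟪nT f ψ t x, ψ t x⟫ * ‖deriv (f t) x‖)
        - (1/2) * ∫ x in a..b, ‖ψ t x‖ ^ 2 * ⟪curv (f t) x, pT f t x⟫ * ‖deriv (f t) x‖) t := by
  have hregt := hreg t (mem_of_mem_nhds hKt)
  have hc := hf.curry_right t
  have hpointwise : EqOn
      (fun x => 2 * ⟪ψ t x, deriv (ψ · x) t⟫ * ‖deriv (f t) x‖
        + ‖ψ t x‖ ^ 2 * (⟪deriv (f t) x, deriv (fun s => deriv (f s) x) t⟫ / ‖deriv (f t) x‖))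
      (fun x => 2 * (⟪nT f ψ t x, ψ t x⟫ * ‖deriv (f t) x‖)
        - ‖ψ t x‖ ^ 2 * ⟪curv (f t) x, pT f t x⟫ * ‖deriv (f t) x‖) (uIcc a b) := by
    intro x hx
    rw [uIcc_of_le hab.le] at hx
    have hweingarten := inner_tang_deriv_of_normal (V := pT f t) hab hc hx (hregt x hx)
      (((hf.uncurry_deriv_left (m := ∞) le_rfl).curry_right t).differentiable (by simp) x)
      hV
    have hschwarz : deriv (fun s => deriv (f s) x) t = deriv (pT f t) x :=
      deriv_deriv_curry_comm (hf.of_le ENat.LEInfty.out) t x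
    dsimp only
    rw [← inner_tang_eq_div_norm, hschwarz, hweingarten,
      show deriv (ψ · x) t = pT ψ t x from rfl, inner_pT_eq_inner_nT (hψn x hx)]
    ring
  have hcurv : IntervalIntegrable
      (fun x => ‖ψ t x‖ ^ 2 * ⟪curv (f t) x, pT f t x⟫ * ‖deriv (f t) x‖) volume a b :=
    intervalIntegrable_mul_norm_deriv hab.le (hc.of_le ENat.LEInfty.out)
      (((hψ.curry_right t).continuous.norm.pow 2).continuousOn.mul
        (((contDiffOn_curv hc).continuousOn.mono hregt).inner
          (continuous_pT (hf.of_le ENat.LEInfty.out) t).continuousOn))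
  refine ((hasDerivAt_integral_norm_sq_mul_norm_deriv hab.le (hf.of_le ENat.LEInfty.out)
    (hψ.of_le ENat.LEInfty.out) hK hKt hreg).const_mul (1/2)).congr_deriv ?_
  have hnT := intervalIntegrable_inner_nT_mul hab.le hf (hψ.of_le ENat.LEInfty.out) hregt
  rw [intervalIntegral.integral_congr hpointwise,
    intervalIntegral.integral_sub (hnT.const_mul 2) hcurv, intervalIntegral.integral_const_mul]
  ring

end Flow

theorem integral_identity_normal_field_general (n : ℕ)
    (T : ℝ)
    (f : ℝ → ℝ → En n)
    (hsmooth : ContDiff ℝ (⊤ : ℕ∞) (Function.uncurry f))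
    (hreg : ∀ t ∈ Set.Ico (0:ℝ) T, ∀ x ∈ Set.Icc (0:ℝ) 1, deriv (f t) x ≠ 0)
    (hnormalflow : ∀ t ∈ Set.Ico (0:ℝ) T, ∀ x ∈ Set.Icc (0:ℝ) 1,
      ⟪pT f t x, tang (f t) x⟫ = 0)
    (ψ : ℝ → ℝ → En n)
    (hψsmooth : ContDiff ℝ (⊤ : ℕ∞) (Function.uncurry ψ))
    (hψnormal : ∀ t ∈ Set.Ico (0:ℝ) T, ∀ x ∈ Set.Icc (0:ℝ) 1,
      ⟪ψ t x, tang (f t) x⟫ = 0) :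
    (∀ t ∈ Set.Ioo (0:ℝ) T,
      HasDerivAt (fun s => (1/2) * ∫ x in (0:ℝ)..1, ‖ψ s x‖ ^ 2 * ‖deriv (f s) x‖)
        (-(∫ x in (0:ℝ)..1, ‖nSF f (nSF f ψ) t x‖ ^ 2 * ‖deriv (f t) x‖)
          - (⟪ψ t 1, nSIter (f t) 3 (ψ t) 1⟫ - ⟪ψ t 0, nSIter (f t) 3 (ψ t) 0⟫)
          + (⟪nS (f t) (ψ t) 1, nSIter (f t) 2 (ψ t) 1⟫
            - ⟪nS (f t) (ψ t) 0, nSIter (f t) 2 (ψ t) 0⟫)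
          + (∫ x in (0:ℝ)..1,
              ⟪nT f ψ t x + nSIter (f t) 4 (ψ t) x, ψ t x⟫ * ‖deriv (f t) x‖)
          - (1/2) * ∫ x in (0:ℝ)..1,
              ‖ψ t x‖ ^ 2 * ⟪curv (f t) x, pT f t x⟫ * ‖deriv (f t) x‖) t) ∧
    ((∀ t ∈ Set.Ico (0:ℝ) T, ψ t 0 = 0 ∧ ψ t 1 = 0) →
      ∀ t ∈ Set.Ico (0:ℝ) T,
        ⟪ψ t 1, nSIter (f t) 3 (ψ t) 1⟫ - ⟪ψ t 0, nSIter (f t) 3 (ψ t) 0⟫ = 0) := by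
  refine ⟨fun t ht => ?_, fun hbd t ht => ?_⟩
  · have htT : t ∈ Ico 0 T := Ioo_subset_Ico_self ht
    obtain ⟨K, hKt, hKT, hK⟩ := local_compact_nhds (Ioo_mem_nhds ht.1 ht.2)
    have hc := hsmooth.curry_right t
    have hψt := hψsmooth.curry_right t
    have hY : ∫ x in (0:ℝ)..1, ⟪nT f ψ t x + nSIter (f t) 4 (ψ t) x, ψ t x⟫ * ‖deriv (f t) x‖
        = (∫ x in (0:ℝ)..1, ⟪nT f ψ t x, ψ t x⟫ * ‖deriv (f t) x‖)
          + ∫ x in (0:ℝ)..1, ⟪ψ t x, nSIter (f t) 4 (ψ t) x⟫ * ‖deriv (f t) x‖ := by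
      rw [← intervalIntegral.integral_add
        (intervalIntegrable_inner_nT_mul zero_le_one hsmooth (hψsmooth.of_le ENat.LEInfty.out)
          (hreg t htT))
        (intervalIntegrable_mul_norm_deriv zero_le_one (hc.of_le ENat.LEInfty.out)
          (hψt.continuous.continuousOn.inner
            ((contDiffOn_nSIter hc hψt 4).continuousOn.mono (hreg t htT))))]
      refine intervalIntegral.integral_congr fun x _ => ?_
      rw [inner_add_left, add_mul, real_inner_comm (nSIter (f t) 4 (ψ t) x)]
    refine (hasDerivAt_half_integral_norm_sq zero_lt_one hsmooth hψsmooth hK hKt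
      (fun s hs => hreg s (Ioo_subset_Ico_self (hKT hs))) (hnormalflow t htT)
      (hψnormal t htT)).congr_deriv ?_
    rw [hY, integral_inner_nSIter_four zero_le_one hc (hreg t htT) hψt (hψnormal t htT)]
    simp only [nSF, nSIter]
    ring
  · obtain ⟨h0, h1⟩ := hbd t ht
    simp [h0, h1]

/-- The basic integral identity: for a purely normal flow `∂ₜf = V` and a normal field `ψ`,
`d/dt (½∫|ψ|² ds) + ∫|∇ₛ²ψ|² ds = -[⟨ψ,∇ₛ³ψ⟩]₀¹ + [⟨∇ₛψ,∇ₛ²ψ⟩]₀¹ + ∫⟨Y,ψ⟩ ds - ½∫|ψ|²⟨κ,V⟩ ds`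
with `Y = ∇ₜψ + ∇ₛ⁴ψ`; moreover the first boundary term vanishes whenever `ψ = 0` on `∂I`. -/
theorem integral_identity_normal_field (n : ℕ) (hn : 2 ≤ n)
    (T : ℝ) (hT : 0 < T)
    (f : ℝ → ℝ → En n)
    (hsmooth : ContDiff ℝ (⊤ : ℕ∞) (Function.uncurry f))
    (hreg : ∀ t ∈ Set.Ico (0:ℝ) T, ∀ x ∈ Set.Icc (0:ℝ) 1, deriv (f t) x ≠ 0)
    (hnormalflow : ∀ t ∈ Set.Ico (0:ℝ) T, ∀ x ∈ Set.Icc (0:ℝ) 1,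
      ⟪pT f t x, tang (f t) x⟫ = 0)
    (ψ : ℝ → ℝ → En n)
    (hψsmooth : ContDiff ℝ (⊤ : ℕ∞) (Function.uncurry ψ))
    (hψnormal : ∀ t ∈ Set.Ico (0:ℝ) T, ∀ x ∈ Set.Icc (0:ℝ) 1,
      ⟪ψ t x, tang (f t) x⟫ = 0) :
    (∀ t ∈ Set.Ioo (0:ℝ) T,
      HasDerivAt (fun s => (1/2) * ∫ x in (0:ℝ)..1, ‖ψ s x‖ ^ 2 * ‖deriv (f s) x‖)
        (-(∫ x in (0:ℝ)..1, ‖nSF f (nSF f ψ) t x‖ ^ 2 * ‖deriv (f t) x‖)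
          - (⟪ψ t 1, nSIter (f t) 3 (ψ t) 1⟫ - ⟪ψ t 0, nSIter (f t) 3 (ψ t) 0⟫)
          + (⟪nS (f t) (ψ t) 1, nSIter (f t) 2 (ψ t) 1⟫
            - ⟪nS (f t) (ψ t) 0, nSIter (f t) 2 (ψ t) 0⟫)
          + (∫ x in (0:ℝ)..1,
              ⟪nT f ψ t x + nSIter (f t) 4 (ψ t) x, ψ t x⟫ * ‖deriv (f t) x‖)
          - (1/2) * ∫ x in (0:ℝ)..1,
              ‖ψ t x‖ ^ 2 * ⟪curv (f t) x, pT f t x⟫ * ‖deriv (f t) x‖) t) ∧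
    ((∀ t ∈ Set.Ico (0:ℝ) T, ψ t 0 = 0 ∧ ψ t 1 = 0) →
      ∀ t ∈ Set.Ico (0:ℝ) T,
        ⟪ψ t 1, nSIter (f t) 3 (ψ t) 1⟫ - ⟪ψ t 0, nSIter (f t) 3 (ψ t) 0⟫ = 0) :=
  integral_identity_normal_field_general n T f hsmooth hreg hnormalflow ψ hψsmooth hψnormal

end
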